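/- arXiv:2605.25380 — 7 statements merged into one kernel-verified Lean document; each statement's English description precedes it below -/
import Mathlib

section
/- Let n ≥ 2 and p ≥ 2 be integers and let F : S_n × S_n → ℝ satisfy the rank-invariance property F(σ∘ρ, τ∘ρ) = F(σ, τ) for all σ, τ, ρ ∈ S_n. Let π_1, …, π_p be independent random permutations, each uniformly distributed on S_n. Set μ_F = (1/(n!)²) Σ_{σ,τ ∈ S_n} F(σ,τ), F̃ = F − μ_F, and for a positive integer q set μ_q = E[F̃(π_1,π_2)^q] and S_q = Σ_{1 ≤ s < t ≤ p} (F̃(π_s,π_t)^q − μ_q). Then E[S_q] = 0, and for any positive integers q_1, q_2, Cov(S_{q_1}, S_{q_2}) = C(p,2) · (E[F̃(π_1,π_2)^{q_1+q_2}] − μ_{q_1} μ_{q_2}), where C(p,2) = p(p−1)/2. -/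
/-!
Rank invariance makes all row and column sums of `F̃ ^ q` equal to `n! * μ_q`, so the kernel
`(σ, τ) ↦ F̃(σ, τ) ^ q - μ_q` is degenerate: summing it over either argument gives `0`.
Summing out one coordinate of the pair `(s, t)` therefore kills the term of `S_q` indexed by
`(s, t)`, even after multiplying by any function not depending on that coordinate. This gives
`E[S_q] = 0`, and it kills every cross term of `S_{q₁} S_{q₂}` between distinct pairs, since
one of the two pairs has an index outside the other. Each of the `C(p, 2)` diagonal terms
contributes `E[F̃ ^ (q₁ + q₂)] - μ_{q₁} μ_{q₂}`.
-/

open Finset Equiv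

lemma Fintype.sum_sum_update {ι α M : Type*} [Fintype ι] [DecidableEq ι] [Fintype α]
    [AddCommMonoid M] (w : ι) (f : (ι → α) → M) :
    ∑ π : ι → α, ∑ x : α, f (Function.update π w x) = Fintype.card α • ∑ π : ι → α, f π := by
  -- `(π, x) ↦ (update π w x, π w)` is an involution of `(ι → α) × α`
  have key : ∑ πx : (ι → α) × α, f (Function.update πx.1 w πx.2)
      = ∑ πx : (ι → α) × α, f πx.1 :=
    Fintype.sum_bijective (fun πx => (Function.update πx.1 w πx.2, πx.1 w))
      (Function.Involutive.bijective fun πx => by simp [Function.update_idem])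
      _ _ fun _ => rfl
  rw [Fintype.sum_prod_type, Fintype.sum_prod_type] at key
  simp [key, Finset.smul_sum]

lemma sum_mul_eq_zero_of_sum_update_eq_zero {ι α : Type*} [Fintype ι] [DecidableEq ι]
    [Fintype α] [Nonempty α] {w : ι} {g h : (ι → α) → ℝ}
    (hg : ∀ π, ∑ x, g (Function.update π w x) = 0)
    (hh : ∀ π x, h (Function.update π w x) = h π) :
    ∑ π, g π * h π = 0 := by
  have hsum := Fintype.sum_sum_update w fun π => g π * h π
  simp only [hh, ← Finset.sum_mul, hg, zero_mul, Finset.sum_const_zero, nsmul_eq_mul] at hsum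
  exact (mul_eq_zero.mp hsum.symm).resolve_left (by positivity)

structure IsDegenerateKernel {α : Type*} [Fintype α] (k : α → α → ℝ) : Prop where
  sum_left : ∀ y, ∑ x, k x y = 0
  sum_right : ∀ x, ∑ y, k x y = 0

def pairSum {ι α : Type*} [Fintype ι] [LinearOrder ι] (k : α → α → ℝ) (π : ι → α) : ℝ :=
  ∑ e : ι × ι with e.1 < e.2, k (π e.1) (π e.2)

namespace IsDegenerateKernel

variable {ι α : Type*} [Fintype ι] [Fintype α] [Nonempty α] {k k' : α → α → ℝ}

section

variable [DecidableEq ι]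

theorem sum_mul_eq_zero (hk : IsDegenerateKernel k) {s t w : ι} (hst : s ≠ t)
    (hw : w = s ∨ w = t) {h : (ι → α) → ℝ} (hh : ∀ π x, h (Function.update π w x) = h π) :
    ∑ π, k (π s) (π t) * h π = 0 := by
  refine sum_mul_eq_zero_of_sum_update_eq_zero (fun π => ?_) hh
  rcases hw with rfl | rfl
  · simpa [Function.update_of_ne hst.symm] using hk.sum_left (π t)
  · simpa [Function.update_of_ne hst] using hk.sum_right (π s)

theorem sum_eq_zero (hk : IsDegenerateKernel k) {s t : ι} (hst : s ≠ t) :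
    ∑ π : ι → α, k (π s) (π t) = 0 := by
  simpa using hk.sum_mul_eq_zero hst (Or.inl rfl) (h := fun _ => 1) fun _ _ => rfl

end

section

variable [LinearOrder ι]

theorem sum_pairSum (hk : IsDegenerateKernel k) : ∑ π : ι → α, pairSum k π = 0 := by
  simp only [pairSum]
  rw [Finset.sum_comm]
  exact Finset.sum_eq_zero fun e he => hk.sum_eq_zero (Finset.mem_filter.mp he).2.ne

theorem sum_pairSum_mul_pairSum (hk : IsDegenerateKernel k) :
    ∑ π : ι → α, pairSum k π * pairSum k' π
      = ∑ e : ι × ι with e.1 < e.2, ∑ π : ι → α, k (π e.1) (π e.2) * k' (π e.1) (π e.2) := by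
  simp only [pairSum, Finset.sum_mul_sum]
  rw [Finset.sum_comm]
  refine Finset.sum_congr rfl fun e he => ?_
  rw [Finset.sum_comm]
  refine Finset.sum_eq_single_of_mem e he fun e' he' hne => ?_
  obtain ⟨a, b⟩ := e
  obtain ⟨c, d⟩ := e'
  have hab : a < b := (Finset.mem_filter.mp he).2
  have hcd : c < d := (Finset.mem_filter.mp he').2
  by_cases hb : b = c ∨ b = d
  · have ha : c ≠ a ∧ d ≠ a := by
      rcases hb with rfl | rfl
      · exact ⟨hab.ne', (hab.trans hcd).ne'⟩
      · exact ⟨fun h => hne (by rw [h]), hab.ne'⟩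
    exact hk.sum_mul_eq_zero hab.ne (Or.inl rfl) fun π x => by
      simp only [Function.update_of_ne ha.1, Function.update_of_ne ha.2]
  · push Not at hb
    exact hk.sum_mul_eq_zero hab.ne (Or.inr rfl) fun π x => by
      simp only [Function.update_of_ne hb.1.symm, Function.update_of_ne hb.2.symm]

end

end IsDegenerateKernel

section RankInvariant

variable {G : Type*} [Group G] [Fintype G] {f : G → G → ℝ}

theorem sum_right_eq_sum_one_right (hf : ∀ σ τ ρ, f (σ * ρ) (τ * ρ) = f σ τ) (σ : G) :
    ∑ τ, f σ τ = ∑ τ, f 1 τ := by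
  calc ∑ τ, f σ τ = ∑ τ, f 1 (τ * σ⁻¹) :=
        Finset.sum_congr rfl fun τ _ => by simpa using hf 1 (τ * σ⁻¹) σ
    _ = ∑ τ, f 1 τ := Fintype.sum_equiv (Equiv.mulRight σ⁻¹) _ _ fun _ => rfl

theorem sum_sum_eq_card_mul_sum_right (hf : ∀ σ τ ρ, f (σ * ρ) (τ * ρ) = f σ τ) (σ : G) :
    ∑ σ', ∑ τ, f σ' τ = Fintype.card G * ∑ τ, f σ τ := by
  simp [sum_right_eq_sum_one_right hf]

theorem sum_sum_eq_card_mul_sum_left (hf : ∀ σ τ ρ, f (σ * ρ) (τ * ρ) = f σ τ) (τ : G) :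
    ∑ σ, ∑ τ', f σ τ' = Fintype.card G * ∑ σ, f σ τ := by
  rw [Finset.sum_comm]
  exact sum_sum_eq_card_mul_sum_right (f := fun σ τ => f τ σ) (fun σ τ ρ => hf τ σ ρ) τ

theorem isDegenerateKernel_sub_average (hf : ∀ σ τ ρ, f (σ * ρ) (τ * ρ) = f σ τ) :
    IsDegenerateKernel fun σ τ => f σ τ - 1 / (Fintype.card G : ℝ) ^ 2 * ∑ σ', ∑ τ', f σ' τ' where
  sum_left τ := by
    rw [Finset.sum_sub_distrib, Finset.sum_const, Finset.card_univ, nsmul_eq_mul,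
      sum_sum_eq_card_mul_sum_left hf τ]
    field_simp
    ring
  sum_right σ := by
    rw [Finset.sum_sub_distrib, Finset.sum_const, Finset.card_univ, nsmul_eq_mul,
      sum_sum_eq_card_mul_sum_right hf σ]
    field_simp
    ring

end RankInvariant

theorem stmt0_general (n p : ℕ)
    (F : Perm (Fin n) → Perm (Fin n) → ℝ)
    (hF : ∀ σ τ ρ : Perm (Fin n), F (σ * ρ) (τ * ρ) = F σ τ)
    (E : ((Fin p → Perm (Fin n)) → ℝ) → ℝ)
    (hE : ∀ G, E G = (1 / (n.factorial : ℝ) ^ p) * ∑ π : Fin p → Perm (Fin n), G π)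
    (μF : ℝ)
    (Ft : Perm (Fin n) → Perm (Fin n) → ℝ)
    (hFt : ∀ σ τ, Ft σ τ = F σ τ - μF)
    (μ : ℕ → ℝ)
    (hμ : ∀ q, μ q = (1 / (n.factorial : ℝ) ^ 2) *
      ∑ σ : Perm (Fin n), ∑ τ : Perm (Fin n), (Ft σ τ) ^ q)
    (S : ℕ → (Fin p → Perm (Fin n)) → ℝ)
    (hS : ∀ q π, S q π =
      ∑ st ∈ Finset.univ.filter (fun st : Fin p × Fin p => st.1 < st.2),
        ((Ft (π st.1) (π st.2)) ^ q - μ q))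
    (q₁ q₂ : ℕ) :
    (∀ q, 0 < q → E (S q) = 0) ∧
    E (fun π => S q₁ π * S q₂ π) - E (S q₁) * E (S q₂)
      = (p.choose 2 : ℝ) * (μ (q₁ + q₂) - μ q₁ * μ q₂) := by
  set c : ℕ → Perm (Fin n) → Perm (Fin n) → ℝ := fun q σ τ => Ft σ τ ^ q - μ q
  have hcard : (Fintype.card (Perm (Fin n)) : ℝ) = n.factorial := by
    rw [Fintype.card_perm, Fintype.card_fin]
  have hc : ∀ q, IsDegenerateKernel (c q) := fun q => by
    simpa only [c, hμ, ← hcard] using isDegenerateKernel_sub_average (f := fun σ τ => Ft σ τ ^ q)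
      fun σ τ ρ => by rw [hFt, hFt, hF]
  have hSc : ∀ q, S q = pairSum (c q) := fun q => funext (hS q)
  have hmean : ∀ q, E (S q) = 0 := fun q => by rw [hE, hSc, (hc q).sum_pairSum, mul_zero]
  have hdiag : ∀ e ∈ (univ : Finset (Fin p × Fin p)).filter (fun e => e.1 < e.2),
      ∑ π : Fin p → Perm (Fin n), c q₁ (π e.1) (π e.2) * c q₂ (π e.1) (π e.2)
        = (n.factorial : ℝ) ^ p * (μ (q₁ + q₂) - μ q₁ * μ q₂) := fun e he => by
    have hne : e.1 ≠ e.2 := (mem_filter.mp he).2.ne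
    calc ∑ π : Fin p → Perm (Fin n), c q₁ (π e.1) (π e.2) * c q₂ (π e.1) (π e.2)
        = ∑ π : Fin p → Perm (Fin n), (c (q₁ + q₂) (π e.1) (π e.2)
            - μ q₁ * c q₂ (π e.1) (π e.2) - μ q₂ * c q₁ (π e.1) (π e.2)
            + (μ (q₁ + q₂) - μ q₁ * μ q₂)) :=
          sum_congr rfl fun π _ => by simp only [c, pow_add]; ring
      _ = (n.factorial : ℝ) ^ p * (μ (q₁ + q₂) - μ q₁ * μ q₂) := by
          rw [sum_add_distrib, sum_sub_distrib, sum_sub_distrib, ← mul_sum, ← mul_sum,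
            (hc _).sum_eq_zero hne, (hc _).sum_eq_zero hne, (hc _).sum_eq_zero hne]
          simp [hcard, mul_sub]
  refine ⟨fun q _ => hmean q, ?_⟩
  rw [hmean, hmean, mul_zero, sub_zero, hE, hSc, hSc, (hc q₁).sum_pairSum_mul_pairSum,
    sum_congr rfl hdiag, sum_const, Fintype.card_product_filter_lt, Fintype.card_fin, nsmul_eq_mul]
  field_simp

/-- For a rank-invariant kernel `F` on pairs of permutations, the
power-sum statistic `S_q` over `p` independent uniform random permutations has
null mean zero, and the covariance of `S_{q₁}` and `S_{q₂}` equals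
`C(p,2) · (E[F̃^{q₁+q₂}] − μ_{q₁} μ_{q₂})`. -/
theorem stmt0 (n p : ℕ) (hn : 2 ≤ n) (hp : 2 ≤ p)
    (F : Perm (Fin n) → Perm (Fin n) → ℝ)
    (hF : ∀ σ τ ρ : Perm (Fin n), F (σ * ρ) (τ * ρ) = F σ τ)
    (E : ((Fin p → Perm (Fin n)) → ℝ) → ℝ)
    (hE : ∀ G, E G = (1 / (n.factorial : ℝ) ^ p) * ∑ π : Fin p → Perm (Fin n), G π)
    (μF : ℝ)
    (hμF : μF = (1 / (n.factorial : ℝ) ^ 2) *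
      ∑ σ : Perm (Fin n), ∑ τ : Perm (Fin n), F σ τ)
    (Ft : Perm (Fin n) → Perm (Fin n) → ℝ)
    (hFt : ∀ σ τ, Ft σ τ = F σ τ - μF)
    (μ : ℕ → ℝ)
    (hμ : ∀ q, μ q = (1 / (n.factorial : ℝ) ^ 2) *
      ∑ σ : Perm (Fin n), ∑ τ : Perm (Fin n), (Ft σ τ) ^ q)
    (S : ℕ → (Fin p → Perm (Fin n)) → ℝ)
    (hS : ∀ q π, S q π =
      ∑ st ∈ Finset.univ.filter (fun st : Fin p × Fin p => st.1 < st.2),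
        ((Ft (π st.1) (π st.2)) ^ q - μ q))
    (q₁ q₂ : ℕ) (hq₁ : 0 < q₁) (hq₂ : 0 < q₂) :
    (∀ q, 0 < q → E (S q) = 0) ∧
    E (fun π => S q₁ π * S q₂ π) - E (S q₁) * E (S q₂)
      = (p.choose 2 : ℝ) * (μ (q₁ + q₂) - μ q₁ * μ q₂) :=
  stmt0_general n p F hF E hE μF Ft hFt μ hμ S hS q₁ q₂
end

section
/- Let n ≥ 2 be an integer and let F : S_n × S_n → ℝ satisfy the rank-invariance property F(σ∘ρ, τ∘ρ) = F(σ, τ) for all σ, τ, ρ ∈ S_n. Let π_1, π_2, π_3 be independent uniform random permutations on S_n, and for a positive integer q set m_q = E[F(π_1,π_2)^q]. Then for any positive integers q_1, q_2, E[(F(π_1,π_2)^{q_1} − m_{q_1})(F(π_1,π_3)^{q_2} − m_{q_2})] = 0; that is, the two overlapping pair statistics F(π_1,π_2)^{q_1} and F(π_1,π_3)^{q_2} are uncorrelated. -/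
/-!
Right invariance `F (σ * ρ) (τ * ρ) = F σ τ` makes every row sum `∑ τ, F σ τ ^ q` equal to the
row sum at `σ = 1`, so `m q` is also the mean of each single row. Hence, once `π₁` is fixed, the
two centred factors have conditional mean zero, and the sum over `(π₂, π₃)` factors as a
product of two vanishing row sums.
-/

open Finset Equiv

section RightInvariant

variable {G : Type*} [Group G] [Fintype G]

theorem sum_right_eq_sum_one_of_mul_right_invariant {β : Type*} [AddCommMonoid β]
    (H : G → G → β) (hH : ∀ σ τ ρ : G, H (σ * ρ) (τ * ρ) = H σ τ) (σ : G) :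
    ∑ τ, H σ τ = ∑ τ, H 1 τ :=
  Fintype.sum_equiv (Equiv.mulRight σ⁻¹) _ _ fun τ => by
    simpa using (hH σ τ σ⁻¹).symm

theorem sum_sub_mean_eq_zero_of_mul_right_invariant {K : Type*} [Field K] [CharZero K]
    (H : G → G → K) (hH : ∀ σ τ ρ : G, H (σ * ρ) (τ * ρ) = H σ τ) (σ : G) :
    ∑ τ, (H σ τ - 1 / (Fintype.card G : K) ^ 2 * ∑ σ', ∑ τ', H σ' τ') = 0 := by
  have hcard : (Fintype.card G : K) ≠ 0 := Nat.cast_ne_zero.mpr Fintype.card_ne_zero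
  simp only [sum_right_eq_sum_one_of_mul_right_invariant H hH, sum_sub_distrib, sum_const,
    card_univ, nsmul_eq_mul]
  field_simp
  ring

end RightInvariant

theorem stmt1_general (n : ℕ)
    (F : Perm (Fin n) → Perm (Fin n) → ℝ)
    (hF : ∀ σ τ ρ : Perm (Fin n), F (σ * ρ) (τ * ρ) = F σ τ)
    (m : ℕ → ℝ)
    (hm : ∀ q, m q = (1 / (n.factorial : ℝ) ^ 2) *
      ∑ σ : Perm (Fin n), ∑ τ : Perm (Fin n), (F σ τ) ^ q)
    (q₁ q₂ : ℕ) :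
    (1 / (n.factorial : ℝ) ^ 3) *
      ∑ π₁ : Perm (Fin n), ∑ π₂ : Perm (Fin n), ∑ π₃ : Perm (Fin n),
        ((F π₁ π₂) ^ q₁ - m q₁) * ((F π₁ π₃) ^ q₂ - m q₂) = 0 := by
  have row_centred : ∀ q π₁, ∑ τ, ((F π₁ τ) ^ q - m q) = 0 := by
    intro q π₁
    have := sum_sub_mean_eq_zero_of_mul_right_invariant (fun σ τ => F σ τ ^ q)
      (fun σ τ ρ => by rw [hF]) π₁
    rwa [Fintype.card_perm, Fintype.card_fin, ← hm] at this
  simp only [← sum_mul_sum, row_centred, sum_const_zero, mul_zero]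

/-- For a rank-invariant kernel `F`, the overlapping-pair power
statistics `F(π₁,π₂)^{q₁}` and `F(π₁,π₃)^{q₂}` are uncorrelated under
independent uniform random permutations. -/
theorem stmt1 (n : ℕ) (hn : 2 ≤ n)
    (F : Perm (Fin n) → Perm (Fin n) → ℝ)
    (hF : ∀ σ τ ρ : Perm (Fin n), F (σ * ρ) (τ * ρ) = F σ τ)
    (m : ℕ → ℝ)
    (hm : ∀ q, m q = (1 / (n.factorial : ℝ) ^ 2) *
      ∑ σ : Perm (Fin n), ∑ τ : Perm (Fin n), (F σ τ) ^ q)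
    (q₁ q₂ : ℕ) (hq₁ : 0 < q₁) (hq₂ : 0 < q₂) :
    (1 / (n.factorial : ℝ) ^ 3) *
      ∑ π₁ : Perm (Fin n), ∑ π₂ : Perm (Fin n), ∑ π₃ : Perm (Fin n),
        ((F π₁ π₂) ^ q₁ - m q₁) * ((F π₁ π₃) ^ q₂ - m q₂) = 0 :=
  stmt1_general n F hF m hm q₁ q₂
end

section
/- For every integer n ≥ 2, the fourth null moment of Spearman's rho satisfies M_{ρ,4}(n) = 3(25n³ − 38n² − 35n + 72) / (25 n (n−1)³ (n+1)). -/
/-!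
Write `S π = ∑ i, a i * a (π i)`. Multiplying by `S π` one factor at a time and splitting each
new summation index according to whether it equals one of the earlier (pairwise distinct) ones,
`S π ^ 4` becomes a sum over the fifteen set partitions of four indices of sums over injective
tuples `y` of `∏ t, f t (y t) * f t (π (y t))`, where each `f t` is a power of `a`. The group of
permutations acts transitively on injective `k`-tuples with stabilisers of order `(n - k)!`, so
summing over `π` turns each of these into `(n - k)!` times the square of the distinct-index sum
`∑ y, ∏ t, f t (y t)`. Inclusion–exclusion expresses these in the power sums of `a`, of which
the odd ones vanish for centred ranks, and `∑ a i ^ 2 = n (n² - 1) / 12`,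
`∑ a i ^ 4 = n (n² - 1) (3n² - 7) / 240`.
-/

open Finset Equiv

theorem MulAction.card_nsmul_sum_smul {G X M : Type*} [Group G] [Fintype G] [MulAction G X]
    [Fintype X] [IsPretransitive G X] [AddCommMonoid M] (F : X → M) (x : X) :
    Fintype.card X • ∑ g : G, F (g • x) = Fintype.card G • ∑ y, F y := by
  have hconst : ∀ y : X, ∑ g : G, F (g • y) = ∑ g : G, F (g • x) := by
    intro y
    obtain ⟨h, rfl⟩ := exists_smul_eq G x y
    simp_rw [smul_smul]
    exact Equiv.sum_comp (Equiv.mulRight h) (fun g => F (g • x))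
  calc Fintype.card X • ∑ g : G, F (g • x) = ∑ y : X, ∑ g : G, F (g • y) := by
        rw [sum_congr rfl fun y _ => hconst y, sum_const, card_univ]
    _ = ∑ g : G, ∑ y, F (g • y) := sum_comm
    _ = ∑ _g : G, ∑ y, F y := sum_congr rfl fun g _ => Equiv.sum_comp (MulAction.toPerm g) F
    _ = Fintype.card G • ∑ y, F y := by rw [sum_const, card_univ]

theorem Equiv.Perm.sum_smul_embedding {β R : Type*} [Fintype β] [DecidableEq β]
    [CommRing R] [IsDomain R] [CharZero R] {k : ℕ} (F : (Fin k ↪ β) → R) (y : Fin k ↪ β) :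
    ∑ π : Perm β, F (π • y) = (Fintype.card β - k).factorial * ∑ z, F z := by
  have : MulAction.IsPretransitive (Perm β) (Fin k ↪ β) := isMultiplyPretransitive β k
  have hk : k ≤ Fintype.card β := by simpa using Fintype.card_le_of_embedding y
  have hcard := MulAction.card_nsmul_sum_smul (G := Perm β) F y
  rw [Fintype.card_embedding_eq, Fintype.card_perm, Fintype.card_fin,
    ← Nat.factorial_mul_descFactorial hk, nsmul_eq_mul, nsmul_eq_mul] at hcard
  push_cast at hcard
  refine mul_left_cancel₀ (Nat.cast_ne_zero.2 (Nat.descFactorial_pos.2 hk).ne' : _ ≠ (0 : R)) ?_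
  linear_combination hcard

lemma prod_update_mul_apply {ι β R : Type*} [Fintype ι] [DecidableEq ι] [CommMonoid R]
    (f : ι → β → R) (g : β → R) (y : ι → β) (t : ι) :
    ∏ s, Function.update f t (f t * g) s (y s) = g (y t) * ∏ s, f s (y s) := by
  rw [← mul_prod_erase univ _ (mem_univ t),
    ← mul_prod_erase univ (fun s => f s (y s)) (mem_univ t), Function.update_self, Pi.mul_apply,
    mul_comm (f t _), mul_assoc]
  congr 2
  refine prod_congr rfl fun s hs => ?_
  rw [Function.update_of_ne (ne_of_mem_erase hs)]

section DistinctSum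

variable {β R : Type*} [Fintype β] {k : ℕ}

section CommSemiring

variable [CommSemiring R]

noncomputable def distinctSum (f : Fin k → β → R) : R :=
  ∑ y : Fin k ↪ β, ∏ t, f t (y t)

noncomputable def pairedSum (π : Perm β) (f : Fin k → β → R) : R :=
  distinctSum fun t b => f t b * f t (π b)

lemma distinctSum_fin_zero (f : Fin 0 → β → R) : distinctSum f = 1 := by
  simp [distinctSum]

variable [DecidableEq β]

lemma sum_mul_distinctSum (g : β → R) (f : Fin k → β → R) :
    (∑ b, g b) * distinctSum f =
      distinctSum (Fin.cons g f) + ∑ t, distinctSum (Function.update f t (f t * g)) := by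
  have hnew : ∑ y : Fin k ↪ β, ∑ b ∈ (univ.map y)ᶜ, g b * ∏ t, f t (y t) =
      distinctSum (Fin.cons g f) := by
    rw [distinctSum, ← (Equiv.embeddingFinSucc k β).symm.sum_comp, Fintype.sum_sigma]
    refine sum_congr rfl fun y _ => ?_
    rw [sum_subtype _ (p := (· ∉ Set.range y)) (by simp)]
    refine sum_congr rfl fun b _ => ?_
    simp [Fin.prod_univ_succ]
  have hold : ∑ y : Fin k ↪ β, ∑ b ∈ univ.map y, g b * ∏ t, f t (y t) =
      ∑ t, distinctSum (Function.update f t (f t * g)) := by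
    simp only [sum_map, distinctSum, prod_update_mul_apply]
    exact sum_comm
  rw [distinctSum, mul_sum, ← hnew, ← hold, ← sum_add_distrib]
  refine sum_congr rfl fun y _ => ?_
  rw [add_comm, sum_add_sum_compl, sum_mul]

lemma sum_mul_pairedSum (a : β → R) (π : Perm β) (f : Fin k → β → R) :
    (∑ b, a b * a (π b)) * pairedSum π f =
      pairedSum π (Fin.cons a f) + ∑ t, pairedSum π (Function.update f t (f t * a)) := by
  rw [pairedSum, sum_mul_distinctSum]
  congr 1
  · congr 1
    funext t
    cases t using Fin.cases <;> rfl
  · refine sum_congr rfl fun t _ => congrArg distinctSum (funext fun s => funext fun b => ?_)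
    rcases eq_or_ne s t with rfl | hst
    · simp only [Function.update_self, Pi.mul_apply]
      ring
    · simp only [Function.update_of_ne hst]

end CommSemiring

variable [DecidableEq β] [CommRing R]

lemma distinctSum_cons (g : β → R) (f : Fin k → β → R) :
    distinctSum (Fin.cons g f) =
      (∑ b, g b) * distinctSum f - ∑ t, distinctSum (Function.update f t (f t * g)) := by
  rw [sum_mul_distinctSum]
  ring

lemma sum_perm_pairedSum [IsDomain R] [CharZero R] (f : Fin k → β → R) :
    ∑ π : Perm β, pairedSum π f = (Fintype.card β - k).factorial * distinctSum f ^ 2 := by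
  simp only [pairedSum, distinctSum, prod_mul_distrib]
  rw [sum_comm]
  simp_rw [← mul_sum]
  calc ∑ y : Fin k ↪ β, (∏ t, f t (y t)) * ∑ π : Perm β, ∏ t, f t (π (y t))
      = ∑ y : Fin k ↪ β, (∏ t, f t (y t)) *
          ((Fintype.card β - k).factorial * ∑ z : Fin k ↪ β, ∏ t, f t (z t)) :=
        sum_congr rfl fun y _ => congrArg _ (Perm.sum_smul_embedding (fun z => ∏ t, f t (z t)) y)
    _ = _ := by rw [← sum_mul]; ring

theorem sum_perm_sum_mul_apply_pow_four [IsDomain R] [CharZero R] (a : β → R)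
    (h1 : ∑ b, a b = 0) (h3 : ∑ b, a b ^ 3 = 0) :
    ∑ π : Perm β, (∑ b, a b * a (π b)) ^ 4 =
      (Fintype.card β - 1).factorial * (∑ b, a b ^ 4) ^ 2
        + (Fintype.card β - 2).factorial *
            (4 * (∑ b, a b ^ 4) ^ 2 + 3 * ((∑ b, a b ^ 2) ^ 2 - ∑ b, a b ^ 4) ^ 2)
        + 6 * (Fintype.card β - 3).factorial * (2 * ∑ b, a b ^ 4 - (∑ b, a b ^ 2) ^ 2) ^ 2
        + (Fintype.card β - 4).factorial *
            (3 * (∑ b, a b ^ 2) ^ 2 - 6 * ∑ b, a b ^ 4) ^ 2 := by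
  have hS : ∀ π : Perm β, (∑ b, a b * a (π b)) ^ 4 =
      (∑ b, a b * a (π b)) * ((∑ b, a b * a (π b)) *
        ((∑ b, a b * a (π b)) * ((∑ b, a b * a (π b)) * pairedSum π ![]))) := fun π => by
    rw [pairedSum, distinctSum_fin_zero]
    ring
  -- The resulting fifteen terms correspond to the set partitions of the four indices.
  simp only [hS, sum_mul_pairedSum, mul_add, Fin.sum_univ_succ, Fin.sum_univ_zero,
    Fin.update_cons_zero, ← Fin.cons_update, Fin.cons_zero, Fin.cons_succ, add_zero]
  simp only [sum_add_distrib, sum_perm_pairedSum]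
  simp only [distinctSum_cons, distinctSum_fin_zero, Fin.sum_univ_succ, Fin.sum_univ_zero,
    Fin.update_cons_zero, ← Fin.cons_update, Fin.cons_zero, Fin.cons_succ, add_zero,
    Pi.mul_apply, zero_add, Nat.reduceAdd, mul_assoc]
  have h4 : ∀ x : R, x ^ 4 = x * (x * (x * x)) := fun x => by ring
  simp only [pow_two, pow_three, h4, h1] at h3 ⊢
  rw [h3]
  ring

end DistinctSum

noncomputable def centeredRank (n : ℕ) (i : Fin n) : ℝ := (i : ℝ) + 1 - ((n : ℝ) + 1) / 2

lemma sum_centeredRank_pow (n k : ℕ) :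
    ∑ i, centeredRank n i ^ k = ∑ i ∈ range n, ((i : ℝ) + (1 - ((n : ℝ) + 1) / 2)) ^ k :=
  (Fin.sum_univ_eq_sum_range (fun i => ((i : ℝ) + 1 - ((n : ℝ) + 1) / 2) ^ k) n).trans
    (sum_congr rfl fun _ _ => by ring)

lemma sum_range_add (n : ℕ) (c : ℝ) :
    ∑ i ∈ range n, ((i : ℝ) + c) = n * (n - 1) / 2 + n * c := by
  induction n with
  | zero => simp
  | succ m ih => rw [sum_range_succ, ih]; push_cast; ring

lemma sum_range_add_sq (n : ℕ) (c : ℝ) :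
    ∑ i ∈ range n, ((i : ℝ) + c) ^ 2 =
      n * (n - 1) * (2 * n - 1) / 6 + c * n * (n - 1) + n * c ^ 2 := by
  induction n with
  | zero => simp
  | succ m ih => rw [sum_range_succ, ih]; push_cast; ring

lemma sum_range_add_pow_three (n : ℕ) (c : ℝ) :
    ∑ i ∈ range n, ((i : ℝ) + c) ^ 3 =
      (n * (n - 1) / 2) ^ 2 + c * n * (n - 1) * (2 * n - 1) / 2 + 3 * c ^ 2 * n * (n - 1) / 2
        + n * c ^ 3 := by
  induction n with
  | zero => simp
  | succ m ih => rw [sum_range_succ, ih]; push_cast; ring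

lemma sum_range_add_pow_four (n : ℕ) (c : ℝ) :
    ∑ i ∈ range n, ((i : ℝ) + c) ^ 4 =
      n * (n - 1) * (2 * n - 1) * (3 * n ^ 2 - 3 * n - 1) / 30 + c * (n * (n - 1)) ^ 2
        + c ^ 2 * n * (n - 1) * (2 * n - 1) + 2 * c ^ 3 * n * (n - 1) + n * c ^ 4 := by
  induction n with
  | zero => simp
  | succ m ih => rw [sum_range_succ, ih]; push_cast; ring

lemma sum_centeredRank (n : ℕ) : ∑ i, centeredRank n i = 0 := by
  have h := sum_centeredRank_pow n 1
  simp only [pow_one] at h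
  rw [h, sum_range_add]
  ring

lemma sum_centeredRank_sq (n : ℕ) :
    ∑ i, centeredRank n i ^ 2 = n * ((n : ℝ) ^ 2 - 1) / 12 := by
  rw [sum_centeredRank_pow, sum_range_add_sq]
  ring

lemma sum_centeredRank_pow_three (n : ℕ) : ∑ i, centeredRank n i ^ 3 = 0 := by
  rw [sum_centeredRank_pow, sum_range_add_pow_three]
  ring

lemma sum_centeredRank_pow_four (n : ℕ) :
    ∑ i, centeredRank n i ^ 4 = n * ((n : ℝ) ^ 2 - 1) * (3 * n ^ 2 - 7) / 240 := by
  rw [sum_centeredRank_pow, sum_range_add_pow_four]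
  ring

open Nat in
lemma spearman_fourth_moment_arith (n : ℕ) :
    1 / (n ! : ℝ) * ((12 / (n * ((n : ℝ) ^ 2 - 1))) ^ 4 *
      (((n - 1)! : ℝ) * (n * ((n : ℝ) ^ 2 - 1) * (3 * n ^ 2 - 7) / 240) ^ 2
        + ((n - 2)! : ℝ) * (4 * (n * ((n : ℝ) ^ 2 - 1) * (3 * n ^ 2 - 7) / 240) ^ 2
            + 3 * ((n * ((n : ℝ) ^ 2 - 1) / 12) ^ 2
              - n * ((n : ℝ) ^ 2 - 1) * (3 * n ^ 2 - 7) / 240) ^ 2)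
        + 6 * ((n - 3)! : ℝ) * (2 * (n * ((n : ℝ) ^ 2 - 1) * (3 * n ^ 2 - 7) / 240)
            - (n * ((n : ℝ) ^ 2 - 1) / 12) ^ 2) ^ 2
        + ((n - 4)! : ℝ) * (3 * (n * ((n : ℝ) ^ 2 - 1) / 12) ^ 2
            - 6 * (n * ((n : ℝ) ^ 2 - 1) * (3 * n ^ 2 - 7) / 240)) ^ 2)) =
    3 * (25 * (n : ℝ) ^ 3 - 38 * (n : ℝ) ^ 2 - 35 * (n : ℝ) + 72) /
      (25 * (n : ℝ) * ((n : ℝ) - 1) ^ 3 * ((n : ℝ) + 1)) := by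
  rcases lt_or_ge n 4 with hn | hn
  · interval_cases n <;> norm_num [factorial]
  obtain ⟨m, rfl⟩ : ∃ m, n = m + 4 := ⟨n - 4, by omega⟩
  rw [show m + 4 - 1 = m + 3 by omega, show m + 4 - 2 = m + 2 by omega,
    show m + 4 - 3 = m + 1 by omega, Nat.add_sub_cancel]
  simp only [factorial_succ]
  have hm : (0 : ℝ) ≤ m := m.cast_nonneg
  have h3 : (m : ℝ) + 4 - 1 ≠ 0 := by linarith
  have h15 : ((m : ℝ) + 4) ^ 2 - 1 ≠ 0 := by nlinarith
  push_cast
  field_simp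
  ring

theorem stmt4_general (n : ℕ)
    (a : Fin n → ℝ) (ha : ∀ i, a i = (i : ℝ) + 1 - ((n : ℝ) + 1) / 2)
    (ρ : Perm (Fin n) → ℝ)
    (hρ : ∀ π, ρ π = (12 / ((n : ℝ) * ((n : ℝ) ^ 2 - 1))) * ∑ i, a i * a (π i))
    (M : ℕ → ℝ)
    (hM : ∀ r, M r = (1 / (n.factorial : ℝ)) * ∑ π : Perm (Fin n), (ρ π) ^ r) :
    M 4 = 3 * (25 * (n : ℝ) ^ 3 - 38 * (n : ℝ) ^ 2 - 35 * (n : ℝ) + 72) /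
      (25 * (n : ℝ) * ((n : ℝ) - 1) ^ 3 * ((n : ℝ) + 1)) := by
  obtain rfl : a = centeredRank n := funext ha
  have hsum := sum_perm_sum_mul_apply_pow_four (centeredRank n) (sum_centeredRank n)
    (sum_centeredRank_pow_three n)
  rw [Fintype.card_fin, sum_centeredRank_sq, sum_centeredRank_pow_four] at hsum
  simp only [hM, hρ, mul_pow]
  rw [← mul_sum, hsum]
  exact spearman_fourth_moment_arith n

/-- Fourth null moment of Spearman's rho. -/
theorem stmt4 (n : ℕ) (hn : 2 ≤ n)
    (a : Fin n → ℝ) (ha : ∀ i, a i = (i : ℝ) + 1 - ((n : ℝ) + 1) / 2)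
    (ρ : Perm (Fin n) → ℝ)
    (hρ : ∀ π, ρ π = (12 / ((n : ℝ) * ((n : ℝ) ^ 2 - 1))) * ∑ i, a i * a (π i))
    (M : ℕ → ℝ)
    (hM : ∀ r, M r = (1 / (n.factorial : ℝ)) * ∑ π : Perm (Fin n), (ρ π) ^ r) :
    M 4 = 3 * (25 * (n : ℝ) ^ 3 - 38 * (n : ℝ) ^ 2 - 35 * (n : ℝ) + 72) /
      (25 * (n : ℝ) * ((n : ℝ) - 1) ^ 3 * ((n : ℝ) + 1)) :=
  stmt4_general n a ha ρ hρ M hM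
end

section
/- For every integer n ≥ 2, the fourth null moment of Kendall's tau satisfies M_{τ,4}(n) = 4(100n⁴ + 328n³ − 127n² − 997n − 372) / (675 n³ (n−1)³). -/
open Finset Equiv

/-!
Inserting the value `n` at position `i` into a permutation of `{0, …, n - 1}` creates exactly
`n - i` new inversions, and every permutation of `{0, …, n}` arises this way exactly once. So the
inversion number of a uniform permutation of `n` letters is a sum of independent uniform variables
on `{0, …, k}`, `k < n`, and its central moments obey a binomial recurrence in `n`: the odd ones
vanish and the second and fourth are polynomials found by induction. Since
`τ = -4 (inv - n(n-1)/4) / (n(n-1))`, the fourth moment of `τ` is `(4 / (n(n-1)))⁴` times the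
fourth central moment of `inv`.
-/

def invCount {n : ℕ} (π : Perm (Fin n)) : ℕ :=
  #{ij : Fin n × Fin n | ij.1 < ij.2 ∧ π ij.2 < π ij.1}

lemma invCount_eq_sum {n : ℕ} (π : Perm (Fin n)) :
    invCount π = ∑ a, ∑ b, if a < b ∧ π b < π a then 1 else 0 := by
  rw [invCount, card_filter, Fintype.sum_prod_type]

section Insertion

variable {n : ℕ}

def insertMax (i : Fin (n + 1)) (σ : Perm (Fin n)) : Perm (Fin (n + 1)) :=
  ((finSuccEquiv' i).trans σ.optionCongr).trans (finSuccEquiv' (Fin.last n)).symm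

@[simp]
lemma insertMax_apply_self (i : Fin (n + 1)) (σ : Perm (Fin n)) :
    insertMax i σ i = Fin.last n := by
  simp [insertMax]

@[simp]
lemma insertMax_apply_succAbove (i : Fin (n + 1)) (σ : Perm (Fin n)) (k : Fin n) :
    insertMax i σ (i.succAbove k) = (σ k).castSucc := by
  simp [insertMax, finSuccEquiv'_symm_some]

lemma invCount_insertMax (i : Fin (n + 1)) (σ : Perm (Fin n)) :
    invCount (insertMax i σ) = (n - i) + invCount σ := by
  set π := insertMax i σ
  have at_self : (∑ b, if i < b ∧ π b < π i then 1 else 0) = n - i := by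
    have h : ∀ b, i < b → π b < π i := fun b hib => by
      rw [insertMax_apply_self, Fin.lt_last_iff_ne_last, ← insertMax_apply_self i σ]
      exact π.injective.ne hib.ne'
    simp_rw [and_iff_left_of_imp (h _), sum_boole, Finset.filter_lt_eq_Ioi, Fin.card_Ioi]
    simp
  have at_succAbove : ∀ k,
      (∑ b, if i.succAbove k < b ∧ π b < π (i.succAbove k) then 1 else 0)
        = ∑ l, if k < l ∧ σ l < σ k then 1 else 0 := fun k => by
    rw [Fin.sum_univ_succAbove _ i]
    simp [π, Fin.succAbove_lt_succAbove_iff, (Fin.castSucc_lt_last _).not_gt]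
  rw [invCount_eq_sum, Fin.sum_univ_succAbove _ i, at_self,
    sum_congr rfl fun k _ => at_succAbove k, invCount_eq_sum]

lemma insertMax_injective :
    Function.Injective fun p : Fin (n + 1) × Perm (Fin n) => insertMax p.1 p.2 := by
  rintro ⟨i, σ⟩ ⟨j, τ⟩ h
  simp only at h
  obtain rfl : i = j := (insertMax j τ).injective <| by
    rw [insertMax_apply_self, ← h, insertMax_apply_self]
  have : σ = τ := Equiv.ext fun k => by
    simpa using congr($h (i.succAbove k))
  rw [this]

lemma insertMax_bijective :
    Function.Bijective fun p : Fin (n + 1) × Perm (Fin n) => insertMax p.1 p.2 :=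
  (Fintype.bijective_iff_injective_and_card _).2
    ⟨insertMax_injective, by simp [Fintype.card_perm, Nat.factorial_succ]⟩

end Insertion

lemma sum_perm_succ_comp_invCount {M : Type*} [AddCommMonoid M] (n : ℕ) (f : ℕ → M) :
    ∑ π : Perm (Fin (n + 1)), f (invCount π)
      = ∑ j ∈ range (n + 1), ∑ σ : Perm (Fin n), f (j + invCount σ) := by
  rw [← Fintype.sum_bijective _ insertMax_bijective (fun p => f (n - p.1 + invCount p.2)) _
    fun p => by rw [invCount_insertMax], Fintype.sum_prod_type,
    Fin.sum_univ_eq_sum_range (fun j => ∑ σ, f (n - j + invCount σ)), ← sum_range_reflect]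
  refine sum_congr rfl fun j hj => ?_
  rw [Nat.add_sub_cancel, Nat.sub_sub_self (Nat.le_of_lt_succ (mem_range.1 hj))]

lemma sum_range_cast_pow_one (m : ℕ) : ∑ j ∈ range m, (j : ℝ) = m * (m - 1) / 2 := by
  induction m with
  | zero => simp
  | succ m ih => rw [sum_range_succ, ih]; push_cast; ring

lemma sum_range_cast_pow_two (m : ℕ) :
    ∑ j ∈ range m, (j : ℝ) ^ 2 = m * (m - 1) * (2 * m - 1) / 6 := by
  induction m with
  | zero => simp
  | succ m ih => rw [sum_range_succ, ih]; push_cast; ring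

lemma sum_range_cast_pow_three (m : ℕ) :
    ∑ j ∈ range m, (j : ℝ) ^ 3 = m ^ 2 * (m - 1) ^ 2 / 4 := by
  induction m with
  | zero => simp
  | succ m ih => rw [sum_range_succ, ih]; push_cast; ring

lemma sum_range_cast_pow_four (m : ℕ) :
    ∑ j ∈ range m, (j : ℝ) ^ 4
      = m * (m - 1) * (2 * m - 1) * (3 * m ^ 2 - 3 * m - 1) / 30 := by
  induction m with
  | zero => simp
  | succ m ih => rw [sum_range_succ, ih]; push_cast; ring

noncomputable def centeredPowSum (n p : ℕ) : ℝ :=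
  ∑ j ∈ range (n + 1), ((j : ℝ) - n / 2) ^ p

lemma centeredPowSum_zero (n : ℕ) : centeredPowSum n 0 = n + 1 := by
  simp [centeredPowSum]

lemma centeredPowSum_of_odd (n : ℕ) {p : ℕ} (hp : Odd p) :
    centeredPowSum n p = 0 := by
  have h := sum_range_reflect (fun j : ℕ => ((j : ℝ) - n / 2) ^ p) (n + 1)
  have hflip : ∀ j ∈ range (n + 1), (((n + 1 - 1 - j : ℕ) : ℝ) - n / 2) ^ p
      = -((j : ℝ) - n / 2) ^ p := fun j hj => by
    rw [Nat.add_sub_cancel, Nat.cast_sub (Nat.le_of_lt_succ (mem_range.1 hj)), ← hp.neg_pow]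
    ring_nf
  rw [sum_congr rfl hflip, sum_neg_distrib] at h
  rw [centeredPowSum]
  linarith

lemma centeredPowSum_two (n : ℕ) :
    centeredPowSum n 2 = n * (n + 1) * (n + 2) / 12 := by
  simp only [centeredPowSum, sub_sq, sum_add_distrib, sum_sub_distrib, ← sum_mul, ← mul_sum,
    sum_const, card_range, nsmul_eq_mul, sum_range_cast_pow_one, sum_range_cast_pow_two]
  push_cast; ring

lemma centeredPowSum_four (n : ℕ) :
    centeredPowSum n 4 = n * (n + 1) * (n + 2) * (3 * n ^ 2 + 6 * n - 4) / 240 := by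
  have sub_pow_four : ∀ x y : ℝ,
      (x - y) ^ 4 = x ^ 4 - 4 * x ^ 3 * y + 6 * x ^ 2 * y ^ 2 - 4 * x * y ^ 3 + y ^ 4 :=
    fun x y => by ring
  simp only [centeredPowSum, sub_pow_four, sum_add_distrib, sum_sub_distrib, ← sum_mul,
    ← mul_sum, sum_const, card_range, nsmul_eq_mul, sum_range_cast_pow_one,
    sum_range_cast_pow_two, sum_range_cast_pow_three, sum_range_cast_pow_four]
  push_cast; ring

noncomputable def invCentralMoment (n r : ℕ) : ℝ :=
  (∑ π : Perm (Fin n), ((invCount π : ℝ) - n * (n - 1) / 4) ^ r) / n.factorial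

lemma invCentralMoment_succ (n r : ℕ) :
    (n + 1) * invCentralMoment (n + 1) r
      = ∑ k ∈ range (r + 1), r.choose k * centeredPowSum n (r - k) * invCentralMoment n k := by
  have hsum : ∑ π : Perm (Fin (n + 1)),
        ((invCount π : ℝ) - (n + 1 : ℕ) * ((n + 1 : ℕ) - 1) / 4) ^ r
      = ∑ k ∈ range (r + 1), r.choose k * centeredPowSum n (r - k)
        * ∑ σ : Perm (Fin n), ((invCount σ : ℝ) - n * (n - 1) / 4) ^ k := by
    have hsplit : ∀ j m : ℕ, ((j + m : ℕ) : ℝ) - (n + 1 : ℕ) * ((n + 1 : ℕ) - 1) / 4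
        = ((m : ℝ) - n * (n - 1) / 4) + ((j : ℝ) - n / 2) := fun j m => by push_cast; ring
    simp_rw [sum_perm_succ_comp_invCount n fun m : ℕ =>
        ((m : ℝ) - (n + 1 : ℕ) * ((n + 1 : ℕ) - 1) / 4) ^ r,
      hsplit, add_pow, centeredPowSum, mul_sum, sum_mul]
    refine (sum_congr rfl fun j _ => sum_comm).trans
      (sum_comm.trans (sum_congr rfl fun k _ => ?_))
    rw [sum_comm]
    exact sum_congr rfl fun j _ => sum_congr rfl fun σ _ => by ring
  rw [invCentralMoment, hsum, Nat.factorial_succ, Nat.cast_mul]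
  simp only [invCentralMoment, mul_div_assoc', ← sum_div]
  rw [Nat.cast_succ, mul_div_mul_left _ _ (by positivity)]

lemma invCentralMoment_zero (n : ℕ) : invCentralMoment n 0 = 1 := by
  simp [invCentralMoment, Fintype.card_perm, n.factorial_ne_zero]

lemma invCentralMoment_one (n : ℕ) : invCentralMoment n 1 = 0 := by
  induction n with
  | zero => simp [invCentralMoment, invCount]
  | succ n ih =>
    refine mul_left_cancel₀ (Nat.cast_add_one_ne_zero n) ?_
    rw [invCentralMoment_succ]
    norm_num [sum_range_succ, invCentralMoment_zero, ih, centeredPowSum_of_odd]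

lemma invCentralMoment_two (n : ℕ) :
    invCentralMoment n 2 = n * (n - 1) * (2 * n + 5) / 72 := by
  induction n with
  | zero => simp [invCentralMoment, invCount]
  | succ n ih =>
    refine mul_left_cancel₀ (Nat.cast_add_one_ne_zero n) ?_
    rw [invCentralMoment_succ]
    norm_num [sum_range_succ, invCentralMoment_zero, invCentralMoment_one, ih,
      centeredPowSum_zero, centeredPowSum_two]
    ring

lemma invCentralMoment_three (n : ℕ) : invCentralMoment n 3 = 0 := by
  induction n with
  | zero => simp [invCentralMoment, invCount]
  | succ n ih =>
    refine mul_left_cancel₀ (Nat.cast_add_one_ne_zero n) ?_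
    rw [invCentralMoment_succ]
    norm_num [sum_range_succ, invCentralMoment_zero, invCentralMoment_one, ih,
      centeredPowSum_of_odd]

lemma invCentralMoment_four (n : ℕ) :
    invCentralMoment n 4
      = n * (n - 1) * (100 * n ^ 4 + 328 * n ^ 3 - 127 * n ^ 2 - 997 * n - 372) / 43200 := by
  induction n with
  | zero => simp [invCentralMoment, invCount]
  | succ n ih =>
    refine mul_left_cancel₀ (Nat.cast_add_one_ne_zero n) ?_
    rw [invCentralMoment_succ]
    norm_num [sum_range_succ, Nat.choose_two_right, invCentralMoment_zero, invCentralMoment_one,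
      invCentralMoment_two, invCentralMoment_three, ih, centeredPowSum_zero, centeredPowSum_two,
      centeredPowSum_four, centeredPowSum_of_odd]
    ring

/-- Fourth null moment of Kendall's tau. -/
theorem stmt9 (n : ℕ) (hn : 2 ≤ n)
    (invp : Perm (Fin n) → ℕ)
    (hinv : ∀ π, invp π = (Finset.univ.filter
      (fun ij : Fin n × Fin n => ij.1 < ij.2 ∧ π ij.2 < π ij.1)).card)
    (τ : Perm (Fin n) → ℝ)
    (hτ : ∀ π, τ π = 1 - 4 * (invp π : ℝ) / ((n : ℝ) * ((n : ℝ) - 1)))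
    (M : ℕ → ℝ)
    (hM : ∀ r, M r = (1 / (n.factorial : ℝ)) * ∑ π : Perm (Fin n), (τ π) ^ r) :
    M 4 = 4 * (100 * (n : ℝ) ^ 4 + 328 * (n : ℝ) ^ 3 - 127 * (n : ℝ) ^ 2
        - 997 * (n : ℝ) - 372) /
      (675 * (n : ℝ) ^ 3 * ((n : ℝ) - 1) ^ 3) := by
  have hn_real : (2 : ℝ) ≤ n := by exact_mod_cast hn
  have hn0 : (n : ℝ) ≠ 0 := (by linarith : (0 : ℝ) < n).ne'
  have hn1 : (n : ℝ) - 1 ≠ 0 := by linarith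
  have hτ_centered :
      ∀ π, τ π = -4 / (n * (n - 1)) * ((invCount π : ℝ) - n * (n - 1) / 4) :=
    fun π => by rw [hτ, hinv π, ← invCount]; field_simp; ring
  have hM4 : M 4 = (-4 / (n * (n - 1))) ^ 4 * invCentralMoment n 4 := by
    simp_rw [hM, invCentralMoment, hτ_centered, mul_pow, ← mul_sum]
    ring
  rw [hM4, invCentralMoment_four]
  field_simp
  ring
end

section
/- For every integer n ≥ 2, the sixth null moment of Kendall's tau satisfies M_{τ,6}(n) = 8 P_{τ,6}(n) / (59535 n⁵ (n−1)⁵), where P_{τ,6}(n) = 9800n⁷ + 32732n⁶ − 42010n⁵ − 230695n⁴ − 72460n³ + 400733n² + 391500n + 118080. -/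
/-!
Inserting the value `v` at the last position of `σ ∈ S_n` adds `n - v` inversions, and every
permutation of `Fin (n + 1)` arises exactly once this way. So the inversion number on `S_{n+1}` is
the inversion number on `S_n` plus an independent uniform variable on `{0, …, n}`. After centring
at the mean `n(n-1)/4`, the increment is uniform on the symmetric set `{j - n/2}`, whose odd power
sums vanish. By the binomial theorem the odd central moments then vanish, and the even central
power sums obey a recurrence in which only even terms survive; it is solved for `r = 2, 4, 6` by
induction. Finally `τ = -4/(n(n-1)) · (inv - n(n-1)/4)`, so `M_6` is a multiple of the sixth
central moment.
-/

open Finset Equiv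

theorem Fin.sum_ite_le_castSucc {n : ℕ} (v : Fin (n + 1)) :
    (∑ i : Fin n, if v ≤ i.castSucc then 1 else 0) = n - v := by
  have h := Fin.sum_univ_castSucc fun j : Fin (n + 1) => if v ≤ j then 1 else 0
  rw [← card_filter, filter_le_eq_Ici, Fin.card_Ici, if_pos (Fin.le_last v)] at h
  omega

namespace Equiv.Perm

variable {n : ℕ}

def numInversions (π : Perm (Fin n)) : ℕ :=
  #{ij : Fin n × Fin n | ij.1 < ij.2 ∧ π ij.2 < π ij.1}

theorem numInversions_eq_sum (π : Perm (Fin n)) :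
    π.numInversions = ∑ i, ∑ j, if i < j ∧ π j < π i then 1 else 0 := by
  rw [numInversions, card_filter, Fintype.sum_prod_type]

noncomputable def insertLast (σ : Perm (Fin n)) (v : Fin (n + 1)) : Perm (Fin (n + 1)) :=
  ofBijective (Fin.snoc (α := fun _ => Fin (n + 1)) (fun i => v.succAbove (σ i)) v) <|
    Finite.injective_iff_bijective.mp <| Fin.snoc_injective_of_injective
      (Fin.succAbove_right_injective.comp σ.injective) fun ⟨i, hi⟩ => Fin.succAbove_ne v (σ i) hi

@[simp]
theorem insertLast_castSucc (σ : Perm (Fin n)) (v : Fin (n + 1)) (i : Fin n) :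
    insertLast σ v i.castSucc = v.succAbove (σ i) := by
  simp [insertLast]

@[simp]
theorem insertLast_last (σ : Perm (Fin n)) (v : Fin (n + 1)) : insertLast σ v (Fin.last n) = v := by
  simp [insertLast]

theorem bijective_insertLast :
    Function.Bijective fun p : Perm (Fin n) × Fin (n + 1) => insertLast p.1 p.2 := by
  refine (Fintype.bijective_iff_injective_and_card _).mpr ⟨?_, ?_⟩
  · rintro ⟨σ, v⟩ ⟨σ', v'⟩ h
    have hv : v = v' := by simpa using congr($h (Fin.last n))
    subst hv
    refine Prod.ext (Equiv.ext fun i => ?_) rfl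
    simpa using congr($h i.castSucc)
  · simp [Fintype.card_perm, Nat.factorial_succ, mul_comm]

theorem numInversions_insertLast (σ : Perm (Fin n)) (v : Fin (n + 1)) :
    (insertLast σ v).numInversions = σ.numInversions + (n - v) := by
  have row (i : Fin n) :
      (∑ j, if i.castSucc < j ∧ insertLast σ v j < insertLast σ v i.castSucc then 1 else 0)
        = (∑ j, if i < j ∧ σ j < σ i then 1 else 0) + if v ≤ (σ i).castSucc then 1 else 0 := by
    rw [Fin.sum_univ_castSucc]
    simp only [insertLast_castSucc, insertLast_last, Fin.castSucc_lt_castSucc_iff,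
      Fin.succAbove_lt_succAbove_iff, Fin.castSucc_lt_last, true_and,
      Fin.lt_succAbove_iff_le_castSucc]
  have lastRow : (∑ j, if Fin.last n < j ∧ insertLast σ v j < v then 1 else 0) = 0 :=
    sum_eq_zero fun j _ => if_neg fun h => (Fin.le_last j).not_gt h.1
  rw [numInversions_eq_sum, Fin.sum_univ_castSucc, Finset.sum_congr rfl fun i _ => row i,
    insertLast_last, lastRow, add_zero, sum_add_distrib, ← numInversions_eq_sum,
    Equiv.sum_comp σ fun i => if v ≤ i.castSucc then 1 else 0, Fin.sum_ite_le_castSucc]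

theorem sum_perm_succ_numInversions {M : Type*} [AddCommMonoid M] (f : ℕ → M) :
    ∑ π : Perm (Fin (n + 1)), f π.numInversions
      = ∑ σ : Perm (Fin n), ∑ j ∈ range (n + 1), f (σ.numInversions + j) := by
  rw [← Fintype.sum_bijective _ bijective_insertLast _ _ fun _ => rfl, Fintype.sum_prod_type]
  refine sum_congr rfl fun σ _ => ?_
  simp only [numInversions_insertLast]
  rw [Fin.sum_univ_eq_sum_range (fun v => f (σ.numInversions + (n - v))), ← sum_range_reflect]
  refine sum_congr rfl fun j hj => ?_
  rw [Nat.add_sub_cancel, Nat.sub_sub_self (mem_range_succ_iff.mp hj)]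

end Equiv.Perm

namespace Kendall

noncomputable def symmPowSum (r n : ℕ) : ℝ := ∑ i ∈ range (n + 1), ((i : ℝ) - n / 2) ^ r

theorem symmPowSum_of_odd {r : ℕ} (hr : Odd r) (n : ℕ) : symmPowSum r n = 0 := by
  have h : symmPowSum r n = -symmPowSum r n := by
    conv_lhs => rw [symmPowSum, ← sum_range_reflect]
    rw [symmPowSum, ← sum_neg_distrib]
    refine sum_congr rfl fun i hi => ?_
    rw [Nat.add_sub_cancel, Nat.cast_sub (mem_range_succ_iff.mp hi),
      show (n : ℝ) - i - n / 2 = -((i : ℝ) - n / 2) by ring, hr.neg_pow]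
  linarith

theorem symmPowSum_add_two (r n : ℕ) :
    symmPowSum r (n + 2) = (-((n : ℝ) / 2 + 1)) ^ r + symmPowSum r n + ((n : ℝ) / 2 + 1) ^ r := by
  have shift : ∑ i ∈ range (n + 1), ((i + 1 : ℕ) - ((n + 2 : ℕ) : ℝ) / 2) ^ r = symmPowSum r n :=
    sum_congr rfl fun i _ => by push_cast; ring_nf
  rw [symmPowSum, sum_range_succ, sum_range_succ', shift]
  push_cast
  ring_nf

theorem symmPowSum_zero (n : ℕ) : symmPowSum 0 n = n + 1 := by
  simp [symmPowSum]

theorem symmPowSum_two (n : ℕ) : symmPowSum 2 n = n * (n + 1) * (n + 2) / 12 := by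
  induction n using Nat.twoStepInduction with
  | zero => simp [symmPowSum]
  | one => norm_num [symmPowSum, sum_range_succ]
  | more n ih _ => rw [symmPowSum_add_two, ih]; push_cast; ring

theorem symmPowSum_four (n : ℕ) :
    symmPowSum 4 n = n * (n + 1) * (n + 2) * (3 * n ^ 2 + 6 * n - 4) / 240 := by
  induction n using Nat.twoStepInduction with
  | zero => simp [symmPowSum]
  | one => norm_num [symmPowSum, sum_range_succ]
  | more n ih _ => rw [symmPowSum_add_two, ih]; push_cast; ring

theorem symmPowSum_six (n : ℕ) :
    symmPowSum 6 n = n * (n + 1) * (n + 2) * (3 * n ^ 4 + 12 * n ^ 3 - 24 * n + 16) / 1344 := by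
  induction n using Nat.twoStepInduction with
  | zero => simp [symmPowSum]
  | one => norm_num [symmPowSum, sum_range_succ]
  | more n ih _ => rw [symmPowSum_add_two, ih]; push_cast; ring

noncomputable def centralPowSum (r n : ℕ) : ℝ :=
  ∑ π : Perm (Fin n), ((π.numInversions : ℝ) - n * (n - 1) / 4) ^ r

theorem centralPowSum_succ (r n : ℕ) :
    centralPowSum r (n + 1)
      = ∑ k ∈ range (r + 1), r.choose k * centralPowSum k n * symmPowSum (r - k) n := by
  have shift (σ : Perm (Fin n)) (j : ℕ) :
      ((σ.numInversions + j : ℕ) : ℝ) - (n + 1 : ℕ) * ((n + 1 : ℕ) - 1) / 4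
        = ((σ.numInversions : ℝ) - n * (n - 1) / 4) + ((j : ℝ) - n / 2) := by
    push_cast; ring
  simp only [centralPowSum, symmPowSum]
  rw [Perm.sum_perm_succ_numInversions fun m => ((m : ℝ) - (n + 1 : ℕ) * ((n + 1 : ℕ) - 1) / 4) ^ r]
  simp only [shift, add_pow, sum_mul, mul_sum]
  simp only [sum_comm (s := range (r + 1))]
  rw [sum_comm]
  exact sum_congr rfl fun j _ => sum_congr rfl fun σ _ => sum_congr rfl fun k _ => by ring

theorem centralPowSum_zero (n : ℕ) : centralPowSum 0 n = n.factorial := by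
  simp [centralPowSum, Fintype.card_perm]

theorem centralPowSum_of_odd (n : ℕ) {r : ℕ} (hr : Odd r) : centralPowSum r n = 0 := by
  induction n generalizing r with
  | zero => simp [centralPowSum, Perm.numInversions, hr.pos.ne']
  | succ n ih =>
    rw [centralPowSum_succ]
    refine sum_eq_zero fun k hkr => ?_
    rcases Nat.even_or_odd k with hk | hk
    · rw [symmPowSum_of_odd (Nat.Odd.sub_even (mem_range_succ_iff.mp hkr) hr hk)]; ring
    · rw [ih hk]; ring

theorem centralPowSum_two (n : ℕ) :
    centralPowSum 2 n = n.factorial * (n * (n - 1) * (2 * n + 5) / 72) := by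
  induction n with
  | zero => simp [centralPowSum, Perm.numInversions]
  | succ n ih =>
    rw [centralPowSum_succ]
    norm_num [sum_range_succ, Nat.choose, centralPowSum_of_odd, symmPowSum_of_odd, Nat.odd_iff,
      centralPowSum_zero, symmPowSum_zero, symmPowSum_two, ih, Nat.factorial_succ]
    ring

theorem centralPowSum_four (n : ℕ) :
    centralPowSum 4 n = n.factorial *
      (n * (n - 1) * (100 * n ^ 4 + 328 * n ^ 3 - 127 * n ^ 2 - 997 * n - 372) / 43200) := by
  induction n with
  | zero => simp [centralPowSum, Perm.numInversions]
  | succ n ih =>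
    rw [centralPowSum_succ]
    norm_num [sum_range_succ, Nat.choose, centralPowSum_of_odd, symmPowSum_of_odd, Nat.odd_iff,
      centralPowSum_zero, symmPowSum_zero, symmPowSum_two, symmPowSum_four, centralPowSum_two, ih,
      Nat.factorial_succ]
    ring

theorem centralPowSum_six (n : ℕ) :
    centralPowSum 6 n = n.factorial * (n * (n - 1) * (9800 * n ^ 7 + 32732 * n ^ 6 - 42010 * n ^ 5
        - 230695 * n ^ 4 - 72460 * n ^ 3 + 400733 * n ^ 2 + 391500 * n + 118080) / 30481920) := by
  induction n with
  | zero => simp [centralPowSum, Perm.numInversions]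
  | succ n ih =>
    rw [centralPowSum_succ]
    norm_num [sum_range_succ, Nat.choose, centralPowSum_of_odd, symmPowSum_of_odd, Nat.odd_iff,
      centralPowSum_zero, symmPowSum_zero, symmPowSum_two, symmPowSum_four, symmPowSum_six,
      centralPowSum_two, centralPowSum_four, ih, Nat.factorial_succ]
    ring

end Kendall

/-- Sixth null moment of Kendall's tau. -/
theorem stmt10 (n : ℕ) (hn : 2 ≤ n)
    (invp : Perm (Fin n) → ℕ)
    (hinv : ∀ π, invp π = (Finset.univ.filter
      (fun ij : Fin n × Fin n => ij.1 < ij.2 ∧ π ij.2 < π ij.1)).card)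
    (τ : Perm (Fin n) → ℝ)
    (hτ : ∀ π, τ π = 1 - 4 * (invp π : ℝ) / ((n : ℝ) * ((n : ℝ) - 1)))
    (M : ℕ → ℝ)
    (hM : ∀ r, M r = (1 / (n.factorial : ℝ)) * ∑ π : Perm (Fin n), (τ π) ^ r) :
    M 6 = 8 * (9800 * (n : ℝ) ^ 7 + 32732 * (n : ℝ) ^ 6 - 42010 * (n : ℝ) ^ 5
        - 230695 * (n : ℝ) ^ 4 - 72460 * (n : ℝ) ^ 3 + 400733 * (n : ℝ) ^ 2
        + 391500 * (n : ℝ) + 118080) /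
      (59535 * (n : ℝ) ^ 5 * ((n : ℝ) - 1) ^ 5) := by
  have hn0 : (n : ℝ) ≠ 0 := by positivity
  have hn1 : (n : ℝ) - 1 ≠ 0 := sub_ne_zero.mpr (by norm_cast; omega)
  have hτ_central (π : Perm (Fin n)) :
      τ π = -(4 / (n * (n - 1))) * ((π.numInversions : ℝ) - n * (n - 1) / 4) := by
    rw [hτ, hinv, ← Perm.numInversions]
    field_simp
    ring
  have hM6 : M 6 = (4 / (n * (n - 1))) ^ 6 * Kendall.centralPowSum 6 n / n.factorial := by
    simp only [hM, hτ_central, mul_pow, Even.neg_pow (by decide : Even 6), Kendall.centralPowSum,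
      ← mul_sum]
    ring
  rw [hM6, Kendall.centralPowSum_six]
  field_simp
  ring
end

section
/- The Bergsma–Dassios–Yanagimoto pattern kernel ψ_{τ*} on S_4 takes exactly the two values 2/3 and −1/3; moreover #{σ ∈ S_4 : ψ_{τ*}(σ) = 2/3} = 8 and #{σ ∈ S_4 : ψ_{τ*}(σ) = −1/3} = 16. -/
open Finset Equiv

/-!
Both B₄(u; ω) and the comparisons defining it only see the relative order of the entries of `u`,
so every real vector in the statement may be replaced by the permutation it is order-isomorphic to.
Then `24 ψ(σ)` is an integer sum over `S₄` that depends only on `σ`, and it is evaluated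
for all 24 permutations by kernel computation.
-/

section Pattern

variable {α β : Type*} [LinearOrder α] [LinearOrder β]

def bdPattern (u : Fin 4 → α) (ω : Perm (Fin 4)) : ℤ :=
    (if max (u (ω 0)) (u (ω 2)) < min (u (ω 1)) (u (ω 3)) then 1 else 0)
  + (if max (u (ω 1)) (u (ω 3)) < min (u (ω 0)) (u (ω 2)) then 1 else 0)
  - (if max (u (ω 0)) (u (ω 3)) < min (u (ω 1)) (u (ω 2)) then 1 else 0)
  - (if max (u (ω 1)) (u (ω 2)) < min (u (ω 0)) (u (ω 3)) then 1 else 0)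

theorem StrictMono.max_lt_min_iff {f : α → β} (hf : StrictMono f) (a b c d : α) :
    max (f a) (f b) < min (f c) (f d) ↔ max a b < min c d := by
  simp only [max_lt_iff, lt_min_iff, hf.lt_iff_lt]

theorem bdPattern_strictMono_comp {f : α → β} (hf : StrictMono f) (u : Fin 4 → α)
    (ω : Perm (Fin 4)) : bdPattern (f ∘ u) ω = bdPattern u ω := by
  simp only [bdPattern, Function.comp_apply, hf.max_lt_min_iff]

end Pattern

def bdKernel (σ : Perm (Fin 4)) : ℤ := ∑ ω : Perm (Fin 4), bdPattern id ω * bdPattern σ ω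

theorem bdKernel_eq_or (σ : Perm (Fin 4)) : bdKernel σ = 16 ∨ bdKernel σ = -8 := by
  revert σ
  decide

theorem card_bdKernel_eq_16 : (univ.filter fun σ => bdKernel σ = 16).card = 8 := by
  decide

theorem card_bdKernel_eq_neg_8 : (univ.filter fun σ => bdKernel σ = -8).card = 16 := by
  decide

theorem strictMono_fin_cast_add_one {n : ℕ} : StrictMono fun i : Fin n => ((i : ℕ) : ℝ) + 1 :=
  fun _ _ h => by simpa using h

/-- The Bergsma–Dassios–Yanagimoto pattern kernel `ψ_{τ*}` on `S₄`
takes exactly the two values `2/3` (on 8 permutations) and `−1/3` (on 16). -/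
theorem stmt13
    (B : (Fin 4 → ℝ) → Perm (Fin 4) → ℝ)
    (hB : ∀ u ω, B u ω =
        (if max (u (ω 0)) (u (ω 2)) < min (u (ω 1)) (u (ω 3)) then (1 : ℝ) else 0)
      + (if max (u (ω 1)) (u (ω 3)) < min (u (ω 0)) (u (ω 2)) then (1 : ℝ) else 0)
      - (if max (u (ω 0)) (u (ω 3)) < min (u (ω 1)) (u (ω 2)) then (1 : ℝ) else 0)
      - (if max (u (ω 1)) (u (ω 2)) < min (u (ω 0)) (u (ω 3)) then (1 : ℝ) else 0))
    (vec : Perm (Fin 4) → Fin 4 → ℝ)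
    (hvec : ∀ σ i, vec σ i = ((σ i).val : ℝ) + 1)
    (e : Fin 4 → ℝ) (he : ∀ i, e i = ((i : ℕ) : ℝ) + 1)
    (ψ : Perm (Fin 4) → ℝ)
    (hψ : ∀ σ, ψ σ = (1 / 24) * ∑ ω : Perm (Fin 4), B e ω * B (vec σ) ω) :
    (∀ σ, ψ σ = 2 / 3 ∨ ψ σ = -(1 / 3)) ∧
    (Finset.univ.filter (fun σ : Perm (Fin 4) => ψ σ = 2 / 3)).card = 8 ∧
    (Finset.univ.filter (fun σ : Perm (Fin 4) => ψ σ = -(1 / 3))).card = 16 := by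
  have hB' : ∀ u ω, B u ω = bdPattern u ω := fun u ω => by rw [hB, bdPattern]; push_cast; rfl
  have he' : e = (fun i : Fin 4 => ((i : ℕ) : ℝ) + 1) ∘ id := funext he
  have hvec' : ∀ σ, vec σ = (fun i : Fin 4 => ((i : ℕ) : ℝ) + 1) ∘ σ := fun σ => funext (hvec σ)
  have hψ' : ∀ σ, ψ σ = bdKernel σ / 24 := fun σ => by
    simp only [hψ, hB', he', hvec', bdPattern_strictMono_comp strictMono_fin_cast_add_one,
      bdKernel]
    push_cast
    ring
  have hiff : ∀ σ, (ψ σ = 2 / 3 ↔ bdKernel σ = 16) ∧ (ψ σ = -(1 / 3) ↔ bdKernel σ = -8) :=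
    fun σ => by rcases bdKernel_eq_or σ with h | h <;> rw [hψ', h] <;> norm_num
  refine ⟨fun σ => (bdKernel_eq_or σ).imp (hiff σ).1.2 (hiff σ).2.2, ?_, ?_⟩
  · simpa only [fun σ => (hiff σ).1] using card_bdKernel_eq_16
  · simpa only [fun σ => (hiff σ).2] using card_bdKernel_eq_neg_8
end

section
/- Let m ≥ 1 and r ≥ 1 be integers and let ψ : S_m → ℝ be any function. For each integer b with m ≤ b ≤ rm, define Ω_{r,b} = (1/b!) Σ_{π ∈ S_b} Σ_{(I_1,…,I_r)} Π_{a=1}^{r} ψ(pat_{I_a}(π)), where the inner sum is over all ordered r-tuples (I_1,…,I_r) of m-element subsets of {1,…,b} with I_1 ∪ ⋯ ∪ I_r = {1,…,b}. Then for every integer n ≥ m, (1/n!) Σ_{Π ∈ S_n} ( Σ_{I ⊆ {1,…,n}, |I| = m} ψ(pat_I(Π)) )^r = Σ_{b=m}^{rm} C(n,b) · Ω_{r,b}, where C(n,b) is the binomial coefficient with the convention C(n,b) = 0 for b > n. -/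
open Finset Equiv
open scoped Nat

/-!
Expanding the `r`-th power turns the moment into a sum over `r`-tuples of `m`-sets, which we
group by their union `J`. For `I ⊆ J` the pattern of `Π` on `I` is read off from the pattern
`ρ_J(Π)` of `Π` on `J`, and `ρ_J` is equidistributed on `S_|J|` because it intertwines right
multiplication by a permutation supported on `J` with right multiplication in `S_|J|`. Hence
each `J` of size `b` contributes `n! Ω_b`; there are `C(n, b)` of them, and `Ω_b = 0` unless
`m ≤ b ≤ r m`.
-/

theorem Fintype.card_nsmul_sum_comp_eq_of_map_mul {G H M : Type*} [Group G] [Group H] [Fintype G]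
    [Fintype H] [AddCommMonoid M] (f : G → H) (s : H → G) (hfs : ∀ g h, f (g * s h) = f g * h)
    (w : H → M) : Fintype.card H • ∑ g, w (f g) = Fintype.card G • ∑ h, w h := by
  calc Fintype.card H • ∑ g, w (f g) = ∑ h, ∑ g, w (f (g * s h)) := by
        rw [← card_univ, ← sum_const]
        exact Finset.sum_congr rfl fun h _ => (Equiv.sum_comp (Equiv.mulRight (s h)) (w ∘ f)).symm
    _ = ∑ g, ∑ h, w (f g * h) := by simp only [hfs]; exact sum_comm
    _ = Fintype.card G • ∑ h, w h := by
        rw [← card_univ, ← sum_const]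
        exact Finset.sum_congr rfl fun g _ => Equiv.sum_comp (Equiv.mulLeft (f g)) w

namespace Tuple

variable {α : Type*} [LinearOrder α] {k : ℕ}

-- `sort f` lists positions by increasing value, so its inverse sends a position to its rank.
noncomputable def rank (f : Fin k → α) : Perm (Fin k) := (sort f)⁻¹

theorem eq_rank_iff {f : Fin k → α} (hf : Function.Injective f) {σ : Perm (Fin k)} :
    σ = rank f ↔ ∀ a b, σ a < σ b ↔ f a < f b := by
  rw [rank, eq_comm, inv_eq_iff_eq_inv, eq_comm, eq_sort_iff]
  constructor
  · rintro ⟨hmono, -⟩ a b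
    have hstrict : StrictMono (f ∘ ⇑σ⁻¹) := hmono.strictMono_of_injective (hf.comp σ⁻¹.injective)
    simpa using hstrict.lt_iff_lt (a := σ a) (b := σ b) |>.symm
  · intro h
    have hstrict : StrictMono (f ∘ ⇑σ⁻¹) := fun x y hxy => by
      simpa using (h (σ⁻¹ x) (σ⁻¹ y)).1 (by simpa using hxy)
    exact ⟨hstrict.monotone, fun i j hij hfij => absurd hfij (hstrict hij).ne⟩

theorem rank_lt_rank_iff {f : Fin k → α} (hf : Function.Injective f) (a b : Fin k) :
    rank f a < rank f b ↔ f a < f b :=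
  (eq_rank_iff hf).1 rfl a b

theorem rank_congr {β : Type*} [LinearOrder β] {f : Fin k → α} {g : Fin k → β}
    (hf : Function.Injective f) (hg : Function.Injective g)
    (h : ∀ a b, f a < f b ↔ g a < g b) : rank f = rank g :=
  (eq_rank_iff hg).2 fun a b => (rank_lt_rank_iff hf a b).trans (h a b)

theorem rank_comp_perm {f : Fin k → α} (hf : Function.Injective f) (π : Perm (Fin k)) :
    rank (f ∘ π) = rank f * π :=
  ((eq_rank_iff (hf.comp π.injective)).2 fun a b => rank_lt_rank_iff hf (π a) (π b)).symm

theorem rank_mul_viaFintypeEmbedding {n k : ℕ} (P : Perm (Fin n)) (e : Fin k ↪ Fin n)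
    (π : Perm (Fin k)) :
    rank (⇑(P * π.viaFintypeEmbedding e) ∘ e) = rank (P ∘ e) * π := by
  have hcomp : ⇑(P * π.viaFintypeEmbedding e) ∘ e = (P ∘ e) ∘ π := by
    ext a
    simp [Perm.viaFintypeEmbedding_apply_image]
  rw [hcomp, rank_comp_perm (P.injective.comp e.injective)]

theorem factorial_mul_sum_rank_comp {R : Type*} [Semiring R] {n k : ℕ} (e : Fin k ↪ Fin n)
    (w : Perm (Fin k) → R) :
    (k ! : R) * ∑ P : Perm (Fin n), w (rank (P ∘ e)) = n ! * ∑ π, w π := by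
  have := Fintype.card_nsmul_sum_comp_eq_of_map_mul (fun P : Perm (Fin n) => rank (P ∘ e))
    (fun π => π.viaFintypeEmbedding e) (fun P π => rank_mul_viaFintypeEmbedding P e π) w
  simpa only [Fintype.card_perm, Fintype.card_fin, nsmul_eq_mul] using this

end Tuple

theorem sum_card_eq_sum_choose_mul {α R : Type*} [Fintype α] [Semiring R] {s : Finset ℕ}
    {f : ℕ → R} (hf : ∀ b ∉ s, f b = 0) :
    ∑ J : Finset α, f J.card = ∑ b ∈ s, ((Fintype.card α).choose b : R) * f b := by
  rw [← powerset_univ, sum_powerset_apply_card, card_univ]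
  simp only [nsmul_eq_mul]
  generalize Fintype.card α = N
  calc ∑ b ∈ range (N + 1), (N.choose b : R) * f b
      = ∑ b ∈ range (N + 1) ∩ s, (N.choose b : R) * f b :=
        (sum_subset inter_subset_left fun b hb hbs => by
          rw [hf b fun h => hbs (mem_inter.2 ⟨hb, h⟩), mul_zero]).symm
    _ = ∑ b ∈ s, (N.choose b : R) * f b :=
        sum_subset inter_subset_right fun b hb hbN => by
          rw [Nat.choose_eq_zero_of_lt (by simpa using fun h => hbN (mem_inter.2 ⟨h, hb⟩)),
            Nat.cast_zero, zero_mul]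

def coveringTuples {α : Type*} [Fintype α] [DecidableEq α] (ι : Type*) [Fintype ι]
    [DecidableEq ι] (m : ℕ) (J : Finset α) : Finset (ι → Finset α) :=
  univ.filter fun T => (∀ i, (T i).card = m) ∧ univ.biUnion T = J

section CoveringTuples

variable {ι α : Type*} [Fintype ι] [DecidableEq ι] [Fintype α] [DecidableEq α]

@[simp]
theorem mem_coveringTuples {m : ℕ} {J : Finset α} {T : ι → Finset α} :
    T ∈ coveringTuples ι m J ↔ (∀ i, (T i).card = m) ∧ univ.biUnion T = J := by
  simp [coveringTuples]

theorem card_mem_Icc_of_mem_coveringTuples [Nonempty ι] {m : ℕ} {J : Finset α}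
    {T : ι → Finset α} (hT : T ∈ coveringTuples ι m J) : J.card ∈ Icc m (Fintype.card ι * m) := by
  obtain ⟨hcard, rfl⟩ := mem_coveringTuples.1 hT
  obtain ⟨i⟩ := ‹Nonempty ι›
  refine mem_Icc.2 ⟨hcard i ▸ card_le_card (subset_biUnion_of_mem T (mem_univ i)), ?_⟩
  calc (univ.biUnion T).card ≤ ∑ i, (T i).card := card_biUnion_le
    _ = Fintype.card ι * m := by simp [hcard]

theorem coveringTuples_map {β : Type*} [Fintype β] [DecidableEq β] (m : ℕ) (e : α ↪ β)
    (J : Finset α) :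
    coveringTuples ι m (J.map e) = (coveringTuples ι m J).map
      ⟨fun T i => (T i).map e, fun _ _ h => funext fun i => map_injective e (congrFun h i)⟩ := by
  have hunion (T : ι → Finset α) :
      univ.biUnion (fun i => (T i).map e) = (univ.biUnion T).map e := by
    simp only [map_eq_image, biUnion_image]
  ext T
  simp only [mem_coveringTuples, mem_map]
  constructor
  · rintro ⟨hcard, hT⟩
    have hsub (i : ι) : T i ⊆ J.map e := hT ▸ subset_biUnion_of_mem T (mem_univ i)
    choose U _ hU using fun i => subset_map_iff.1 (hsub i)
    have hTU : (fun i => (U i).map e) = T := funext fun i => (hU i).symm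
    refine ⟨U, ⟨fun i => ?_, ?_⟩, hTU⟩
    · rw [← card_map e, ← hU i, hcard i]
    · rw [← map_inj (f := e), ← hunion, hTU, hT]
  · rintro ⟨U, ⟨hcard, rfl⟩, rfl⟩
    exact ⟨fun i => (card_map e).trans (hcard i), hunion U⟩

theorem pow_sum_card_eq_sum_coveringTuples {R : Type*} [CommSemiring R] (m r : ℕ)
    (f : Finset α → R) :
    (∑ I ∈ univ.filter (fun I : Finset α => I.card = m), f I) ^ r
      = ∑ J, ∑ T ∈ coveringTuples (Fin r) m J, ∏ a, f (T a) := by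
  rw [sum_pow', ← sum_fiberwise _ (fun T => univ.biUnion T)]
  refine sum_congr rfl fun J _ => sum_congr ?_ fun _ _ => rfl
  ext T
  simp [coveringTuples]

end CoveringTuples

def IsRankPattern {m : ℕ} (pat : ∀ k : ℕ, Perm (Fin k) → Finset (Fin k) → Perm (Fin m)) : Prop :=
  ∀ (k : ℕ) (π : Perm (Fin k)) (I : Finset (Fin k)) (h : I.card = m) (a b : Fin m),
    pat k π I a < pat k π I b ↔ π (I.orderIsoOfFin h a : Fin k) < π (I.orderIsoOfFin h b : Fin k)

namespace IsRankPattern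

variable {m : ℕ} {pat : ∀ k : ℕ, Perm (Fin k) → Finset (Fin k) → Perm (Fin m)}

theorem eq_rank (hpat : IsRankPattern pat) {k : ℕ} (π : Perm (Fin k)) (I : Finset (Fin k))
    (h : I.card = m) : pat k π I = Tuple.rank (π ∘ I.orderEmbOfFin h) :=
  (Tuple.eq_rank_iff (π.injective.comp (I.orderEmbOfFin h).injective)).2 fun a b => by
    simpa using hpat k π I h a b

theorem map_orderEmbedding (hpat : IsRankPattern pat) {n k : ℕ} (P : Perm (Fin n))
    (e : Fin k ↪o Fin n) (I : Finset (Fin k)) (h : I.card = m) :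
    pat n P (I.map e.toEmbedding) = pat k (Tuple.rank (P ∘ e)) I := by
  have hmap : (I.map e.toEmbedding).card = m := (card_map _).trans h
  have hemb : ⇑((I.map e.toEmbedding).orderEmbOfFin hmap) = e ∘ I.orderEmbOfFin h :=
    (orderEmbOfFin_unique hmap (fun x => mem_map_of_mem _ (orderEmbOfFin_mem I h x))
      (e.strictMono.comp (I.orderEmbOfFin h).strictMono)).symm
  have hPe : Function.Injective (P ∘ e) := P.injective.comp e.injective
  rw [hpat.eq_rank P _ hmap, hpat.eq_rank _ I h, hemb]
  exact Tuple.rank_congr (hPe.comp (I.orderEmbOfFin h).injective)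
    ((Tuple.rank (P ∘ e)).injective.comp (I.orderEmbOfFin h).injective)
    fun a b => (Tuple.rank_lt_rank_iff hPe _ _).symm

theorem factorial_mul_sum_coveringTuples_map (hpat : IsRankPattern pat) {ι R : Type*}
    [Fintype ι] [DecidableEq ι] [CommSemiring R] (ψ : Perm (Fin m) → R) {n k : ℕ}
    (e : Fin k ↪o Fin n) :
    (k ! : R) * ∑ T ∈ coveringTuples ι m (univ.map e.toEmbedding), ∑ P : Perm (Fin n),
        ∏ i, ψ (pat n P (T i))
      = n ! * ∑ π : Perm (Fin k), ∑ T ∈ coveringTuples ι m univ, ∏ i, ψ (pat k π (T i)) := by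
  calc (k ! : R) * ∑ T ∈ coveringTuples ι m (univ.map e.toEmbedding), ∑ P : Perm (Fin n),
        ∏ i, ψ (pat n P (T i))
      = ∑ T ∈ coveringTuples ι m univ, (k ! : R) * ∑ P : Perm (Fin n),
          ∏ i, ψ (pat k (Tuple.rank (P ∘ e)) (T i)) := by
        rw [coveringTuples_map, sum_map, mul_sum]
        refine sum_congr rfl fun T hT => congrArg _ <| sum_congr rfl fun P _ =>
          prod_congr rfl fun i _ => congrArg ψ ?_
        exact hpat.map_orderEmbedding P e (T i) ((mem_coveringTuples.1 hT).1 i)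
    _ = ∑ T ∈ coveringTuples ι m univ, (n ! : R) * ∑ π : Perm (Fin k), ∏ i, ψ (pat k π (T i)) :=
        sum_congr rfl fun T _ =>
          Tuple.factorial_mul_sum_rank_comp e.toEmbedding fun π => ∏ i, ψ (pat k π (T i))
    _ = n ! * ∑ π : Perm (Fin k), ∑ T ∈ coveringTuples ι m univ, ∏ i, ψ (pat k π (T i)) := by
        rw [← mul_sum, sum_comm]

theorem factorial_mul_sum_coveringTuples (hpat : IsRankPattern pat) {ι R : Type*} [Fintype ι]
    [DecidableEq ι] [CommSemiring R] (ψ : Perm (Fin m) → R) {n : ℕ} (J : Finset (Fin n)) :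
    (J.card ! : R) * ∑ T ∈ coveringTuples ι m J, ∑ P : Perm (Fin n), ∏ i, ψ (pat n P (T i))
      = n ! * ∑ π : Perm (Fin J.card), ∑ T ∈ coveringTuples ι m univ,
          ∏ i, ψ (pat J.card π (T i)) := by
  simpa using hpat.factorial_mul_sum_coveringTuples_map ψ (J.orderEmbOfFin rfl)

end IsRankPattern

theorem stmt16_general (m r : ℕ) (hr : 1 ≤ r)
    (ψ : Perm (Fin m) → ℝ)
    (pat : ∀ (k : ℕ), Perm (Fin k) → Finset (Fin k) → Perm (Fin m))
    (hpat : ∀ (k : ℕ) (π : Perm (Fin k)) (I : Finset (Fin k)) (h : I.card = m)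
        (a b : Fin m),
        pat k π I a < pat k π I b ↔
          π ((I.orderIsoOfFin h a : Fin k)) < π ((I.orderIsoOfFin h b : Fin k)))
    (Ω : ℕ → ℝ)
    (hΩ : ∀ b, Ω b = (1 / (b.factorial : ℝ)) * ∑ π : Perm (Fin b),
      ∑ I ∈ Finset.univ.filter (fun I : Fin r → Finset (Fin b) =>
          (∀ a, (I a).card = m) ∧ Finset.univ.biUnion I = Finset.univ),
        ∏ a, ψ (pat b π (I a)))
    (n : ℕ) :
    (1 / (n.factorial : ℝ)) * ∑ P : Perm (Fin n),
        (∑ I ∈ Finset.univ.filter (fun I : Finset (Fin n) => I.card = m),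
          ψ (pat n P I)) ^ r
      = ∑ b ∈ Finset.Icc m (r * m), (n.choose b : ℝ) * Ω b := by
  have hΩ' (b : ℕ) : Ω b = 1 / (b ! : ℝ) * ∑ π : Perm (Fin b),
      ∑ T ∈ coveringTuples (Fin r) m univ, ∏ a, ψ (pat b π (T a)) := by
    -- not `rfl`: the filter in `hΩ` decides `∀ a : Fin r` by a different instance
    rw [hΩ]
    congr! 3
    ext T
    simp [coveringTuples]
  have hfiber (J : Finset (Fin n)) : ∑ T ∈ coveringTuples (Fin r) m J, ∑ P : Perm (Fin n),
      ∏ a, ψ (pat n P (T a)) = n ! * Ω J.card := by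
    apply mul_left_cancel₀ (by positivity : (J.card ! : ℝ) ≠ 0)
    rw [IsRankPattern.factorial_mul_sum_coveringTuples hpat, hΩ']
    field_simp
  have hΩ_zero (b : ℕ) (hb : b ∉ Icc m (r * m)) : Ω b = 0 := by
    have : Nonempty (Fin r) := ⟨⟨0, hr⟩⟩
    have hempty : coveringTuples (Fin r) m (univ : Finset (Fin b)) = ∅ :=
      eq_empty_of_forall_notMem fun T hT =>
        hb (by simpa using card_mem_Icc_of_mem_coveringTuples hT)
    simp [hΩ', hempty]
  calc (1 / (n ! : ℝ)) * ∑ P : Perm (Fin n),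
        (∑ I ∈ univ.filter (fun I : Finset (Fin n) => I.card = m), ψ (pat n P I)) ^ r
      = ∑ J : Finset (Fin n), Ω J.card := by
        simp_rw [pow_sum_card_eq_sum_coveringTuples]
        rw [sum_comm, mul_sum]
        refine sum_congr rfl fun J _ => ?_
        rw [sum_comm, hfiber]
        field_simp
    _ = ∑ b ∈ Icc m (r * m), (n.choose b : ℝ) * Ω b := by
        simpa using sum_card_eq_sum_choose_mul (α := Fin n) hΩ_zero

/-- Binomial-basis expansion of the `r`-th moment of a pattern-kernel
U-statistic sum over a uniform random permutation.  `pat k π I` is the rank pattern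
of `π` on the `m`-element subset `I` (characterized by `hpat`). -/
theorem stmt16 (m r : ℕ) (hm : 1 ≤ m) (hr : 1 ≤ r)
    (ψ : Perm (Fin m) → ℝ)
    (pat : ∀ (k : ℕ), Perm (Fin k) → Finset (Fin k) → Perm (Fin m))
    (hpat : ∀ (k : ℕ) (π : Perm (Fin k)) (I : Finset (Fin k)) (h : I.card = m)
        (a b : Fin m),
        pat k π I a < pat k π I b ↔
          π ((I.orderIsoOfFin h a : Fin k)) < π ((I.orderIsoOfFin h b : Fin k)))
    (Ω : ℕ → ℝ)
    (hΩ : ∀ b, Ω b = (1 / (b.factorial : ℝ)) * ∑ π : Perm (Fin b),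
      ∑ I ∈ Finset.univ.filter (fun I : Fin r → Finset (Fin b) =>
          (∀ a, (I a).card = m) ∧ Finset.univ.biUnion I = Finset.univ),
        ∏ a, ψ (pat b π (I a)))
    (n : ℕ) (hn : m ≤ n) :
    (1 / (n.factorial : ℝ)) * ∑ P : Perm (Fin n),
        (∑ I ∈ Finset.univ.filter (fun I : Finset (Fin n) => I.card = m),
          ψ (pat n P I)) ^ r
      = ∑ b ∈ Finset.Icc m (r * m), (n.choose b : ℝ) * Ω b :=
  stmt16_general m r hr ψ pat hpat Ω hΩ n
end
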